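/- Let 𝓡 be a semi-proper cell space, let Q be a set, let Q^M carry the uniformity of discrete convergence on compacta, let Δ : Q^M → Q^M be a map, and let H be a subgroup of G with {g_{m₀,m} : m ∈ M} ⊆ H. Then the following are equivalent: (1) Δ is the global transition function of a semi-cellular automaton 𝓒 over 𝓡 which is invertible with an inverse 𝓒' such that the local transition functions of both 𝓒 and 𝓒' are •_{H₀}-invariant and both 𝓒 and 𝓒' have compact essential neighbourhoods; (2) Δ is ⇀_H-equivariant and is a uniform isomorphism (a bijection such that Δ and Δ⁻¹ are uniformly continuous). -/

import Mathlib

open MulAction Filter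

/-- The right quotient-set semi-action `⋊` induced by a coordinate system
`(m₀, coord)`: `m ⋊ gG₀ = (coord m * g) • m₀`. -/
def semiAct {G M : Type*} [Group G] [MulAction G M] (m₀ : M) (coord : M → G)
    (m : M) (𝔤 : G ⧸ stabilizer G m₀) : M :=
  coord m • ofQuotientStabilizer G m₀ 𝔤

/-- The left action `•` of the stabiliser `G₀` on local configurations `ℓ ∈ Q^N`,
`(g₀ • ℓ)(n) = ℓ(g₀⁻¹ · n)`. -/
def bulletAct {G M : Type*} [Group G] [MulAction G M] {m₀ : M}
    {N : Set (G ⧸ stabilizer G m₀)}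
    (hN : ∀ g₀ ∈ stabilizer G m₀, ∀ n ∈ N, g₀ • n ∈ N) {Q : Type*}
    (g₀ : G) (hg₀ : g₀ ∈ stabilizer G m₀) (ℓ : N → Q) : N → Q :=
  fun n => ℓ ⟨g₀⁻¹ • (n : G ⧸ stabilizer G m₀), hN g₀⁻¹ (inv_mem hg₀) _ n.2⟩

/-- The left action `⇀` of `G` on global configurations `c ∈ Q^M`,
`(g ⇀ c)(m) = c(g⁻¹ ⇀ m)`. -/
def shiftConf {G M : Type*} [Group G] [MulAction G M] {Q : Type*}
    (g : G) (c : M → Q) : M → Q :=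
  fun m => c (g⁻¹ • m)

/-- The global transition function `Δ` of the semi-cellular automaton `(Q, N, δ)`:
`Δ(c)(m) = δ(n ↦ c(m ⋊ n))`. -/
def globalTrans {G M : Type*} [Group G] [MulAction G M] (m₀ : M) (coord : M → G)
    {Q : Type*} (N : Set (G ⧸ stabilizer G m₀)) (δ : (N → Q) → Q)
    (c : M → Q) : M → Q :=
  fun m => δ fun n => c (semiAct m₀ coord m (n : G ⧸ stabilizer G m₀))

/-- The uniformity of discrete convergence on compacta on `Q^M`: a base of
entourages is given by the sets `𝔈(K) = {(c,c') : c|_K = c'|_K}` for `K ⊆ M`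
compact. -/
noncomputable def discConvUniformity (Q M : Type*) [TopologicalSpace M] :
    UniformSpace (M → Q) :=
  UniformSpace.ofCore
    { uniformity := ⨅ (K : Set M) (_ : IsCompact K),
        Filter.principal {p : (M → Q) × (M → Q) | ∀ x ∈ K, p.1 x = p.2 x}
      refl := le_iInf fun K => le_iInf fun _ => by
        rw [Filter.le_principal_iff, Filter.mem_principal]
        rintro ⟨c, c'⟩ h
        simp only [SetRel.mem_id] at h
        subst h
        intro x _
        rfl
      symm := by
        refine Filter.tendsto_iInf.mpr fun K => Filter.tendsto_iInf.mpr fun hK => ?_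
        refine Filter.tendsto_principal.mpr ?_
        have hmem : {p : (M → Q) × (M → Q) | ∀ x ∈ K, p.1 x = p.2 x} ∈
            ⨅ (K : Set M) (_ : IsCompact K),
              Filter.principal {p : (M → Q) × (M → Q) | ∀ x ∈ K, p.1 x = p.2 x} := by
          refine Filter.mem_iInf_of_mem K ?_
          exact Filter.mem_iInf_of_mem hK (Filter.mem_principal_self _)
        filter_upwards [hmem] with p hp x hx
        exact (hp x hx).symm
      comp := le_iInf fun K => le_iInf fun hK => by
        have hmem : {p : (M → Q) × (M → Q) | ∀ x ∈ K, p.1 x = p.2 x} ∈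
            ⨅ (K : Set M) (_ : IsCompact K),
              Filter.principal {p : (M → Q) × (M → Q) | ∀ x ∈ K, p.1 x = p.2 x} :=
          Filter.mem_iInf_of_mem K (Filter.mem_iInf_of_mem hK (Filter.mem_principal_self _))
        refine Filter.lift'_le hmem ?_
        rw [Filter.le_principal_iff, Filter.mem_principal]
        rintro ⟨c, c'⟩ ⟨b, hb1, hb2⟩ x hx
        exact (hb1 x hx).trans (hb2 x hx)
      }

/-- A left group set `(M, G, ⇀)`, with `M` a topological space and `G` a topological
group, is *semi-proper* if the action is continuous and its action map
`α : G × M → M × M, (g,m) ↦ (g ⇀ m, m)` is semi-proper, i.e. for each compact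
`K ⊆ M × M`, every transversal of the family of fibres `{α⁻¹(k) : k ∈ K}` is
included in a compact subset of `G × M`. -/
def SemiProperSMul (G M : Type*) [Group G] [MulAction G M]
    [TopologicalSpace G] [TopologicalSpace M] : Prop :=
  Continuous (fun p : G × M => p.1 • p.2) ∧
  ∀ K : Set (M × M), IsCompact K →
    ∀ t : M × M → G × M,
      (∀ k ∈ K, (∃ p : G × M, ((p.1 • p.2, p.2) : M × M) = k) →
        (((t k).1 • (t k).2, (t k).2) : M × M) = k) →
      ∃ C : Set (G × M), IsCompact C ∧
        {p : G × M | ∃ k ∈ K,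
          (∃ q : G × M, ((q.1 • q.2, q.2) : M × M) = k) ∧ p = t k} ⊆ C

/-! For `(1) → (2)`: semi-properness puts the coordinates of a compact `K ⊆ M` into a compact
`C ⊆ G`, so on `K` the configuration `Δ c` only depends on `c` on the compact set `C ⇀ (m₀ ⋊ E)`;
and `h⁻¹ ⇀ (m ⋊ n) = (h⁻¹ ⇀ m) ⋊ (g₀ · n)` with `g₀ ∈ H₀`, so `•_{H₀}`-invariance of `δ` makes `Δ`
`⇀_H`-equivariant. For `(2) → (1)`: an `⇀_H`-equivariant map is recovered from `c ↦ Δ c m₀`,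
which is a local rule with neighbourhood `G/G₀`; uniform continuity at the entourage `𝔈({m₀})`
yields a compact essential neighbourhood, and the inverse of an equivariant bijection is
equivariant. -/

section

attribute [local instance] discConvUniformity

section DiscConv

variable {Q M : Type*} [TopologicalSpace M]

theorem discConvUniformity_hasBasis :
    (uniformity (M → Q)).HasBasis IsCompact
      fun K => {p : (M → Q) × (M → Q) | ∀ x ∈ K, p.1 x = p.2 x} :=
  hasBasis_biInf_principal'
    (fun K hK K' hK' => ⟨K ∪ K', hK.union hK', fun _ hp x hx => hp x (.inl hx),
      fun _ hp x hx => hp x (.inr hx)⟩)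
    ⟨∅, isCompact_empty⟩

theorem uniformContinuous_discConv_iff {f : (M → Q) → M → Q} :
    UniformContinuous f ↔ ∀ K, IsCompact K → ∃ K', IsCompact K' ∧
      ∀ c c' : M → Q, (∀ x ∈ K', c x = c' x) → ∀ x ∈ K, f c x = f c' x :=
  discConvUniformity_hasBasis.uniformContinuous_iff discConvUniformity_hasBasis

end DiscConv

theorem SemiProperSMul.exists_isCompact_coord_mem {G M : Type*} [Group G] [MulAction G M]
    [TopologicalSpace G] [TopologicalSpace M] (hsp : SemiProperSMul G M) {m₀ : M}
    {coord : M → G} (hc : ∀ m, coord m • m₀ = m) {K : Set M} (hK : IsCompact K) :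
    ∃ C : Set G, IsCompact C ∧ ∀ m ∈ K, coord m ∈ C := by
  obtain ⟨C, hC, hsub⟩ := hsp.2 (K ×ˢ {m₀}) (hK.prod isCompact_singleton)
    (fun k => (coord k.1, m₀)) (fun k hk _ => by
      obtain ⟨-, rfl : k.2 = m₀⟩ := hk
      simp [hc])
  refine ⟨Prod.fst '' C, hC.image continuous_fst, fun m hm => ⟨(coord m, m₀), ?_, rfl⟩⟩
  exact hsub ⟨(m, m₀), ⟨hm, rfl⟩, ⟨(coord m, m₀), by simp [hc]⟩, rfl⟩

section SemiAct

variable {G M : Type*} [Group G] [MulAction G M] {m₀ : M} {coord : M → G}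

theorem semiAct_mk (m : M) (g : G) :
    semiAct m₀ coord m (g : G ⧸ stabilizer G m₀) = (coord m * g) • m₀ := by
  rw [semiAct, ofQuotientStabilizer_mk, mul_smul]

theorem semiAct_mk_coord (hc : ∀ m, coord m • m₀ = m) (m m' : M) :
    semiAct m₀ coord m (coord m' : G ⧸ stabilizer G m₀) = coord m • m' := by
  rw [semiAct_mk, mul_smul, hc]

theorem semiAct_eq_smul_semiAct_origin (hc0 : coord m₀ = 1) (m : M) (n : G ⧸ stabilizer G m₀) :
    semiAct m₀ coord m n = coord m • semiAct m₀ coord m₀ n := by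
  rw [semiAct, semiAct, hc0, one_smul]

theorem semiAct_origin_eq (hc0 : coord m₀ = 1) :
    semiAct m₀ coord m₀ = ofQuotientStabilizer G m₀ :=
  funext fun n => by rw [semiAct, hc0, one_smul]

theorem inv_coord_smul_mul_coord_mem_stabilizer (hc : ∀ m, coord m • m₀ = m) (g : G) (m : M) :
    (coord (g • m))⁻¹ * g * coord m ∈ stabilizer G m₀ := by
  rw [mem_stabilizer_iff, mul_smul, mul_smul, hc, inv_smul_eq_iff, hc]

theorem smul_semiAct (g : G) (m : M) (n : G ⧸ stabilizer G m₀) :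
    g • semiAct m₀ coord m n =
      semiAct m₀ coord (g • m) (((coord (g • m))⁻¹ * g * coord m) • n) := by
  rw [semiAct, semiAct, ofQuotientStabilizer_smul, smul_smul, smul_smul, mul_assoc,
    mul_inv_cancel_left]

end SemiAct

section Forward

variable {G M Q : Type*} [Group G] [MulAction G M] {m₀ : M} {coord : M → G}

theorem globalTrans_shiftConf (hc : ∀ m, coord m • m₀ = m) {H : Subgroup G}
    (hH : ∀ m, coord m ∈ H) {N : Set (G ⧸ stabilizer G m₀)}
    (hN : ∀ g₀ ∈ stabilizer G m₀, ∀ n ∈ N, g₀ • n ∈ N) {δ : (N → Q) → Q}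
    (hδ : ∀ h₀ : G, h₀ ∈ H → ∀ hs : h₀ ∈ stabilizer G m₀,
      ∀ ℓ : N → Q, δ (bulletAct hN h₀ hs ℓ) = δ ℓ)
    {h : G} (hh : h ∈ H) (c : M → Q) :
    globalTrans m₀ coord N δ (shiftConf h c) = shiftConf h (globalTrans m₀ coord N δ c) := by
  funext m
  set g₀ := (coord (h⁻¹ • m))⁻¹ * h⁻¹ * coord m
  have hg₀ : g₀ ∈ stabilizer G m₀ := inv_coord_smul_mul_coord_mem_stabilizer hc h⁻¹ m
  have hg₀H : g₀⁻¹ ∈ H := inv_mem (mul_mem (mul_mem (inv_mem (hH _)) (inv_mem hh)) (hH m))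
  have hlocal : (fun n : N => shiftConf h c (semiAct m₀ coord m n)) =
      bulletAct hN g₀⁻¹ (inv_mem hg₀) fun n => c (semiAct m₀ coord (h⁻¹ • m) n) := by
    funext n
    simp only [shiftConf, bulletAct, inv_inv, smul_semiAct h⁻¹ m, g₀]
  exact (congrArg δ hlocal).trans (hδ _ hg₀H _ _)

theorem uniformContinuous_globalTrans [TopologicalSpace G] [TopologicalSpace M]
    (hsp : SemiProperSMul G M) (hc : ∀ m, coord m • m₀ = m) (hc0 : coord m₀ = 1)
    {N : Set (G ⧸ stabilizer G m₀)} {δ : (N → Q) → Q} {E : Set (G ⧸ stabilizer G m₀)}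
    (hEc : IsCompact (semiAct m₀ coord m₀ '' E))
    (hEe : ∀ ℓ ℓ' : N → Q, (∀ n : N, (n : G ⧸ stabilizer G m₀) ∈ E → ℓ n = ℓ' n) → δ ℓ = δ ℓ') :
    UniformContinuous (globalTrans m₀ coord N δ) := by
  refine uniformContinuous_discConv_iff.2 fun K hK => ?_
  obtain ⟨C, hC, hCK⟩ := hsp.exists_isCompact_coord_mem hc hK
  refine ⟨(fun p : G × M => p.1 • p.2) '' C ×ˢ (semiAct m₀ coord m₀ '' E),
    (hC.prod hEc).image hsp.1, fun c c' hcc' m hm => hEe _ _ fun n hn => hcc' _ ?_⟩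
  rw [semiAct_eq_smul_semiAct_origin hc0]
  exact ⟨(coord m, _), ⟨hCK m hm, n, hn, rfl⟩, rfl⟩

end Forward

section Backward

variable {G M Q : Type*} [Group G] [MulAction G M] {m₀ : M} {coord : M → G}

/-- The configuration `c` with `c (m₀ ⋊ n) = ℓ n`, read off through the coordinates. -/
def configOfLocal (m₀ : M) (coord : M → G) (ℓ : ↥(Set.univ : Set (G ⧸ stabilizer G m₀)) → Q) :
    M → Q :=
  fun m => ℓ ⟨(coord m : G ⧸ stabilizer G m₀), Set.mem_univ _⟩

def localRuleOf (m₀ : M) (coord : M → G) (Δ : (M → Q) → M → Q) :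
    (↥(Set.univ : Set (G ⧸ stabilizer G m₀)) → Q) → Q :=
  fun ℓ => Δ (configOfLocal m₀ coord ℓ) m₀

theorem configOfLocal_semiAct (hc : ∀ m, coord m • m₀ = m) (c : M → Q) (m : M) :
    configOfLocal m₀ coord (fun n => c (semiAct m₀ coord m n)) = shiftConf (coord m)⁻¹ c :=
  funext fun m' => by rw [configOfLocal, semiAct_mk_coord hc, shiftConf, inv_inv]

theorem configOfLocal_bulletAct (hc : ∀ m, coord m • m₀ = m) {h₀ : G}
    (hs : h₀ ∈ stabilizer G m₀) (ℓ : ↥(Set.univ : Set (G ⧸ stabilizer G m₀)) → Q) :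
    configOfLocal m₀ coord (bulletAct (fun _ _ _ _ => Set.mem_univ _) h₀ hs ℓ) =
      shiftConf h₀ (configOfLocal m₀ coord ℓ) := by
  funext m
  refine congrArg ℓ (Subtype.ext ?_)
  show ((h₀⁻¹ * coord m : G) : G ⧸ stabilizer G m₀) = (coord (h₀⁻¹ • m) : G)
  rw [QuotientGroup.eq, mem_stabilizer_iff, mul_inv_rev, inv_inv, mul_assoc, mul_smul,
    mul_smul, hc, smul_inv_smul, inv_smul_eq_iff, hc]

theorem localRuleOf_exists_isCompact_essential [TopologicalSpace M]
    (hc : ∀ m, coord m • m₀ = m) (hc0 : coord m₀ = 1) {Δ : (M → Q) → M → Q}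
    (hΔ : UniformContinuous Δ) :
    ∃ E : Set (G ⧸ stabilizer G m₀), E ⊆ Set.univ ∧ IsCompact (semiAct m₀ coord m₀ '' E) ∧
      ∀ ℓ ℓ' : ↥(Set.univ : Set (G ⧸ stabilizer G m₀)) → Q,
        (∀ n : ↥(Set.univ : Set (G ⧸ stabilizer G m₀)), (n : G ⧸ stabilizer G m₀) ∈ E →
          ℓ n = ℓ' n) → localRuleOf m₀ coord Δ ℓ = localRuleOf m₀ coord Δ ℓ' := by
  obtain ⟨K, hK, hKΔ⟩ := uniformContinuous_discConv_iff.1 hΔ {m₀} isCompact_singleton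
  have hsurj : Function.Surjective (ofQuotientStabilizer G m₀) := fun m =>
    ⟨coord m, by rw [ofQuotientStabilizer_mk, hc]⟩
  refine ⟨ofQuotientStabilizer G m₀ ⁻¹' K, Set.subset_univ _, ?_,
    fun ℓ ℓ' hℓ => hKΔ _ _ (fun m hm => hℓ _ ?_) m₀ rfl⟩
  · rwa [semiAct_origin_eq hc0, Set.image_preimage_eq _ hsurj]
  · rwa [Set.mem_preimage, ofQuotientStabilizer_mk, hc]

variable {H : Subgroup G} {Δ : (M → Q) → M → Q}
  (hΔ : ∀ h ∈ H, ∀ c : M → Q, Δ (shiftConf h c) = shiftConf h (Δ c))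
include hΔ

theorem eq_globalTrans_localRuleOf (hc : ∀ m, coord m • m₀ = m) (hH : ∀ m, coord m ∈ H) :
    Δ = globalTrans m₀ coord Set.univ (localRuleOf m₀ coord Δ) := by
  funext c m
  rw [globalTrans, localRuleOf, configOfLocal_semiAct hc, hΔ _ (inv_mem (hH m)), shiftConf,
    inv_inv, hc]

theorem localRuleOf_bulletAct (hc : ∀ m, coord m • m₀ = m) {h₀ : G} (hh₀ : h₀ ∈ H)
    (hs : h₀ ∈ stabilizer G m₀) (ℓ : ↥(Set.univ : Set (G ⧸ stabilizer G m₀)) → Q) :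
    localRuleOf m₀ coord Δ (bulletAct (fun _ _ _ _ => Set.mem_univ _) h₀ hs ℓ) =
      localRuleOf m₀ coord Δ ℓ := by
  rw [localRuleOf, localRuleOf, configOfLocal_bulletAct hc, hΔ h₀ hh₀, shiftConf,
    inv_smul_eq_iff.2 (mem_stabilizer_iff.1 hs).symm]

end Backward

end

theorem invertible_uniform_curtis_hedlund_lyndon_general {G M : Type*} [Group G]
    [TopologicalSpace G] [TopologicalSpace M] [MulAction G M]
    (m₀ : M) (coord : M → G)
    (hc : ∀ m : M, coord m • m₀ = m) (hc0 : coord m₀ = 1)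
    (hsp : SemiProperSMul G M)
    {Q : Type*} (Δ : (M → Q) → (M → Q))
    (H : Subgroup G) (hH : ∀ m : M, coord m ∈ H) :
    (∃ (N : Set (G ⧸ stabilizer G m₀))
       (hN : ∀ g₀ ∈ stabilizer G m₀, ∀ n ∈ N, g₀ • n ∈ N)
       (δ : (N → Q) → Q)
       (N' : Set (G ⧸ stabilizer G m₀))
       (hN' : ∀ g₀ ∈ stabilizer G m₀, ∀ n ∈ N', g₀ • n ∈ N')
       (δ' : (N' → Q) → Q),
        Δ = globalTrans m₀ coord N δ ∧
        Function.LeftInverse (globalTrans m₀ coord N' δ') (globalTrans m₀ coord N δ) ∧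
        Function.RightInverse (globalTrans m₀ coord N' δ') (globalTrans m₀ coord N δ) ∧
        (∀ h₀ : G, h₀ ∈ H → ∀ hs : h₀ ∈ stabilizer G m₀,
          ∀ ℓ : N → Q, δ (bulletAct hN h₀ hs ℓ) = δ ℓ) ∧
        (∀ h₀ : G, h₀ ∈ H → ∀ hs : h₀ ∈ stabilizer G m₀,
          ∀ ℓ : N' → Q, δ' (bulletAct hN' h₀ hs ℓ) = δ' ℓ) ∧
        (∃ E : Set (G ⧸ stabilizer G m₀), E ⊆ N ∧
          IsCompact (semiAct m₀ coord m₀ '' E) ∧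
          ∀ ℓ ℓ' : N → Q,
            (∀ n : N, (n : G ⧸ stabilizer G m₀) ∈ E → ℓ n = ℓ' n) → δ ℓ = δ ℓ') ∧
        (∃ E' : Set (G ⧸ stabilizer G m₀), E' ⊆ N' ∧
          IsCompact (semiAct m₀ coord m₀ '' E') ∧
          ∀ ℓ ℓ' : N' → Q,
            (∀ n : N', (n : G ⧸ stabilizer G m₀) ∈ E' → ℓ n = ℓ' n) → δ' ℓ = δ' ℓ'))
    ↔ ((∀ h ∈ H, ∀ c : M → Q, Δ (shiftConf h c) = shiftConf h (Δ c)) ∧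
        ∃ Δinv : (M → Q) → (M → Q),
          Function.LeftInverse Δinv Δ ∧ Function.RightInverse Δinv Δ ∧
          @UniformContinuous (M → Q) (M → Q)
            (discConvUniformity Q M) (discConvUniformity Q M) Δ ∧
          @UniformContinuous (M → Q) (M → Q)
            (discConvUniformity Q M) (discConvUniformity Q M) Δinv) := by
  constructor
  · rintro ⟨N, hN, δ, N', hN', δ', rfl, hli, hri, hδ, -, ⟨E, -, hEc, hEe⟩, ⟨E', -, hEc', hEe'⟩⟩
    exact ⟨fun h hh => globalTrans_shiftConf hc hH hN hδ hh, _, hli, hri,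
      uniformContinuous_globalTrans hsp hc hc0 hEc hEe,
      uniformContinuous_globalTrans hsp hc hc0 hEc' hEe'⟩
  · rintro ⟨hΔ, Δinv, hli, hri, hΔuc, hΔinvuc⟩
    have hΔinv : ∀ h ∈ H, ∀ c : M → Q, Δinv (shiftConf h c) = shiftConf h (Δinv c) :=
      fun h hh => (Function.Semiconj.inverse_left (hΔ h hh) hli hri :)
    have hΔδ := eq_globalTrans_localRuleOf hΔ hc hH
    have hΔδ' := eq_globalTrans_localRuleOf hΔinv hc hH
    refine ⟨Set.univ, fun _ _ _ _ => Set.mem_univ _, localRuleOf m₀ coord Δ,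
      Set.univ, fun _ _ _ _ => Set.mem_univ _, localRuleOf m₀ coord Δinv, hΔδ,
      hΔδ ▸ hΔδ' ▸ hli, hΔδ ▸ hΔδ' ▸ hri,
      fun _ hh₀ hs => localRuleOf_bulletAct hΔ hc hh₀ hs,
      fun _ hh₀ hs => localRuleOf_bulletAct hΔinv hc hh₀ hs,
      localRuleOf_exists_isCompact_essential hc hc0 hΔuc,
      localRuleOf_exists_isCompact_essential hc hc0 hΔinvuc⟩

/-- Let `𝓡` be a semi-proper cell space, let `Q` be a set, let `Q^M` carry the
uniformity of discrete convergence on compacta, let `Δ : Q^M → Q^M` be a map, and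
let `H` be a subgroup of `G` with `{g_{m₀,m} : m ∈ M} ⊆ H`.  The following are
equivalent:
(1) `Δ` is the global transition function of a semi-cellular automaton `𝓒` over `𝓡`
which is invertible with an inverse `𝓒'` such that the local transition functions
of both `𝓒` and `𝓒'` are `•_{H₀}`-invariant and both `𝓒` and `𝓒'` have compact
essential neighbourhoods;
(2) `Δ` is `⇀_H`-equivariant and a uniform isomorphism. -/
theorem invertible_uniform_curtis_hedlund_lyndon {G M : Type*} [Group G]
    [TopologicalSpace G] [IsTopologicalGroup G] [TopologicalSpace M] [MulAction G M]
    (htrans : ∀ m m' : M, ∃ g : G, g • m = m')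
    (m₀ : M) (coord : M → G)
    (hc : ∀ m : M, coord m • m₀ = m) (hc0 : coord m₀ = 1)
    (hsp : SemiProperSMul G M)
    {Q : Type*} (Δ : (M → Q) → (M → Q))
    (H : Subgroup G) (hH : ∀ m : M, coord m ∈ H) :
    (∃ (N : Set (G ⧸ stabilizer G m₀))
       (hN : ∀ g₀ ∈ stabilizer G m₀, ∀ n ∈ N, g₀ • n ∈ N)
       (δ : (N → Q) → Q)
       (N' : Set (G ⧸ stabilizer G m₀))
       (hN' : ∀ g₀ ∈ stabilizer G m₀, ∀ n ∈ N', g₀ • n ∈ N')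
       (δ' : (N' → Q) → Q),
        Δ = globalTrans m₀ coord N δ ∧
        Function.LeftInverse (globalTrans m₀ coord N' δ') (globalTrans m₀ coord N δ) ∧
        Function.RightInverse (globalTrans m₀ coord N' δ') (globalTrans m₀ coord N δ) ∧
        (∀ h₀ : G, h₀ ∈ H → ∀ hs : h₀ ∈ stabilizer G m₀,
          ∀ ℓ : N → Q, δ (bulletAct hN h₀ hs ℓ) = δ ℓ) ∧
        (∀ h₀ : G, h₀ ∈ H → ∀ hs : h₀ ∈ stabilizer G m₀,
          ∀ ℓ : N' → Q, δ' (bulletAct hN' h₀ hs ℓ) = δ' ℓ) ∧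
        (∃ E : Set (G ⧸ stabilizer G m₀), E ⊆ N ∧
          IsCompact (semiAct m₀ coord m₀ '' E) ∧
          ∀ ℓ ℓ' : N → Q,
            (∀ n : N, (n : G ⧸ stabilizer G m₀) ∈ E → ℓ n = ℓ' n) → δ ℓ = δ ℓ') ∧
        (∃ E' : Set (G ⧸ stabilizer G m₀), E' ⊆ N' ∧
          IsCompact (semiAct m₀ coord m₀ '' E') ∧
          ∀ ℓ ℓ' : N' → Q,
            (∀ n : N', (n : G ⧸ stabilizer G m₀) ∈ E' → ℓ n = ℓ' n) → δ' ℓ = δ' ℓ'))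
    ↔ ((∀ h ∈ H, ∀ c : M → Q, Δ (shiftConf h c) = shiftConf h (Δ c)) ∧
        ∃ Δinv : (M → Q) → (M → Q),
          Function.LeftInverse Δinv Δ ∧ Function.RightInverse Δinv Δ ∧
          @UniformContinuous (M → Q) (M → Q)
            (discConvUniformity Q M) (discConvUniformity Q M) Δ ∧
          @UniformContinuous (M → Q) (M → Q)
            (discConvUniformity Q M) (discConvUniformity Q M) Δinv) :=
  invertible_uniform_curtis_hedlund_lyndon_general m₀ coord hc hc0 hsp Δ H hH
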